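/- arXiv:1406.5557 — 2 statements merged into one kernel-verified Lean document; each statement's English description precedes it below -/
import Mathlib

section
/- For every integer k ≥ 1 and every n ≥ 0, the matrix M_k^{(n)} is doubly stochastic: all its entries are nonnegative, and the sum of the entries in each row and in each column is equal to 1. -/
/-!
Write `S = ∑ᵢ aᵢ`, so that `M = (S + Sᵀ) / (2k + 2)`. Every column of every `aᵢ` sums to `1`,
since each column of a block `aᵢ⁽ⁿ⁺¹⁾` meets exactly one nonzero block, itself some `aⱼ⁽ⁿ⁾`.
Summing the recursions gives `S⁽ⁿ⁺¹⁾ = [[a₀, a₁ + ⋯ + a_k], [a₀ + ⋯ + a_{k-1}, a_k]]`, whose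
two block rows both add up to `S⁽ⁿ⁾`; so every row of `S` sums to `k + 1`, as do its columns.
Hence `S / (k + 1)` is doubly stochastic, and `M` is the average of it and its transpose.
-/

open Matrix

/-- Equivalence identifying `Fin (2^n) ⊕ Fin (2^n)` with `Fin (2^(n+1))`. -/
def blockEquiv (n : ℕ) : Fin (2 ^ n) ⊕ Fin (2 ^ n) ≃ Fin (2 ^ (n + 1)) :=
  finSumFinEquiv.trans (finCongr (by rw [pow_succ, mul_two]))

/-- Assemble a `2^(n+1) × 2^(n+1)` matrix from four `2^n × 2^n` blocks. -/
noncomputable def mkBlock {n : ℕ} (A B C D : Matrix (Fin (2 ^ n)) (Fin (2 ^ n)) ℝ) :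
    Matrix (Fin (2 ^ (n + 1))) (Fin (2 ^ (n + 1))) ℝ :=
  Matrix.reindex (blockEquiv n) (blockEquiv n) (Matrix.fromBlocks A B C D)

/-- The family `a_i^{(n)}`, `i = 0, …, k`, of generators of the BBS with carrier capacity
`k`: `a_i^{(0)} = (1)`, and the block recursions
`a_0^{(n+1)} = [[a_0, a_1], [0, 0]]`, `a_i^{(n+1)} = [[0, a_{i+1}], [a_{i-1}, 0]]` for
`1 ≤ i ≤ k−1`, `a_k^{(n+1)} = [[0, 0], [a_{k-1}, a_k]]`. -/
noncomputable def aK (k : ℕ) : (n : ℕ) → ℕ → Matrix (Fin (2 ^ n)) (Fin (2 ^ n)) ℝ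
  | 0 => fun _ => 1
  | n + 1 => fun i =>
      if i = 0 then mkBlock (aK k n 0) (aK k n 1) 0 0
      else if i = k then mkBlock 0 0 (aK k n (k - 1)) (aK k n k)
      else mkBlock 0 (aK k n (i + 1)) (aK k n (i - 1)) 0

/-- The transition operator `M_k^{(n)} = (1/(2k+2)) Σ_{i=0}^k (a_i^{(n)} + a_i^{(n)ᵀ})`. -/
noncomputable def MK (k n : ℕ) : Matrix (Fin (2 ^ n)) (Fin (2 ^ n)) ℝ :=
  ((2 * k + 2 : ℝ))⁻¹ • ∑ i ∈ Finset.range (k + 1), (aK k n i + (aK k n i)ᵀ)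

open Finset

section mkBlock

variable {n : ℕ} (A B C D : Matrix (Fin (2 ^ n)) (Fin (2 ^ n)) ℝ)

lemma mkBlock_apply (p q : Fin (2 ^ (n + 1))) :
    mkBlock A B C D p q =
      fromBlocks A B C D ((blockEquiv n).symm p) ((blockEquiv n).symm q) := rfl

lemma mkBlock_nonneg (hA : ∀ i j, 0 ≤ A i j) (hB : ∀ i j, 0 ≤ B i j) (hC : ∀ i j, 0 ≤ C i j)
    (hD : ∀ i j, 0 ≤ D i j) (p q : Fin (2 ^ (n + 1))) : 0 ≤ mkBlock A B C D p q := by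
  rw [mkBlock_apply]
  rcases (blockEquiv n).symm p with r | r <;> rcases (blockEquiv n).symm q with c | c
  exacts [hA r c, hB r c, hC r c, hD r c]

lemma mkBlock_add (A' B' C' D' : Matrix (Fin (2 ^ n)) (Fin (2 ^ n)) ℝ) :
    mkBlock A B C D + mkBlock A' B' C' D' = mkBlock (A + A') (B + B') (C + C') (D + D') := by
  simp only [mkBlock, ← fromBlocks_add]; rfl

lemma mkBlock_sum {ι : Type*} (s : Finset ι) (A B C D : ι → Matrix (Fin (2 ^ n)) (Fin (2 ^ n)) ℝ) :
    ∑ i ∈ s, mkBlock (A i) (B i) (C i) (D i) =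
      mkBlock (∑ i ∈ s, A i) (∑ i ∈ s, B i) (∑ i ∈ s, C i) (∑ i ∈ s, D i) := by
  induction s using Finset.cons_induction with
  | empty => simp [mkBlock]
  | cons a s ha ih => simp only [sum_cons, ih, mkBlock_add]

lemma mkBlock_mulVec_one :
    mkBlock A B C D *ᵥ 1 = Sum.elim (A *ᵥ 1 + B *ᵥ 1) (C *ᵥ 1 + D *ᵥ 1) ∘ (blockEquiv n).symm := by
  simp [mkBlock, submatrix_mulVec_equiv, fromBlocks_mulVec]

lemma one_vecMul_mkBlock :
    1 ᵥ* mkBlock A B C D = Sum.elim (1 ᵥ* A + 1 ᵥ* C) (1 ᵥ* B + 1 ᵥ* D) ∘ (blockEquiv n).symm := by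
  simp [mkBlock, submatrix_vecMul_equiv, vecMul_fromBlocks]

end mkBlock

section aK

variable {k n i : ℕ}

lemma aK_succ_zero : aK k (n + 1) 0 = mkBlock (aK k n 0) (aK k n 1) 0 0 := by
  simp [aK]

lemma aK_succ_self (hk : k ≠ 0) :
    aK k (n + 1) k = mkBlock 0 0 (aK k n (k - 1)) (aK k n k) := by
  simp [aK, hk]

lemma aK_succ_of_ne (h0 : i ≠ 0) (hk : i ≠ k) :
    aK k (n + 1) i = mkBlock 0 (aK k n (i + 1)) (aK k n (i - 1)) 0 := by
  simp [aK, h0, hk]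

lemma aK_nonneg (p q : Fin (2 ^ n)) : 0 ≤ aK k n i p q := by
  induction n generalizing i with
  | zero => simp only [aK, one_apply]; split_ifs <;> norm_num
  | succ n ih =>
    simp only [aK]
    split_ifs <;> apply mkBlock_nonneg <;> intros <;> first | exact le_rfl | exact ih ..

lemma one_vecMul_aK (hk : 1 ≤ k) (hi : i ≤ k) : 1 ᵥ* aK k n i = 1 := by
  induction n generalizing i with
  | zero => exact vecMul_one 1
  | succ n ih =>
    have hcol : ∀ j ≤ k, 1 ᵥ* aK k n j = 1 := fun j hj => ih hj
    rcases eq_or_ne i 0 with rfl | h0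
    · rw [aK_succ_zero, one_vecMul_mkBlock, hcol 0 (Nat.zero_le k), hcol 1 hk]
      simp
    rcases eq_or_ne i k with rfl | hik
    · rw [aK_succ_self h0, one_vecMul_mkBlock, hcol (i - 1) (by omega), hcol i le_rfl]
      simp
    · rw [aK_succ_of_ne h0 hik, one_vecMul_mkBlock, hcol (i + 1) (by omega),
        hcol (i - 1) (by omega)]
      simp

end aK

noncomputable def aKSum (k n : ℕ) : Matrix (Fin (2 ^ n)) (Fin (2 ^ n)) ℝ :=
  ∑ i ∈ range (k + 1), aK k n i

section aKSum

variable {k n : ℕ}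

lemma aKSum_nonneg (p q : Fin (2 ^ n)) : 0 ≤ aKSum k n p q := by
  rw [aKSum, Matrix.sum_apply]
  exact sum_nonneg fun i _ => aK_nonneg p q

lemma one_vecMul_aKSum (hk : 1 ≤ k) : 1 ᵥ* aKSum k n = fun _ => (k : ℝ) + 1 := by
  have hcol : ∀ i ∈ range (k + 1), 1 ᵥ* aK k n i = 1 := fun i hi =>
    one_vecMul_aK hk (Nat.lt_succ_iff.mp (mem_range.mp hi))
  rw [aKSum, vecMul_sum, sum_congr rfl hcol]
  ext
  simp

lemma aKSum_succ (hk : 1 ≤ k) :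
    aKSum k (n + 1) = mkBlock (aK k n 0) (∑ i ∈ range k, aK k n (i + 1))
      (∑ i ∈ range k, aK k n i) (aK k n k) := by
  obtain ⟨m, rfl⟩ : ∃ m, k = m + 1 := ⟨k - 1, by omega⟩
  have hmid : ∀ i ∈ range m, aK (m + 1) (n + 1) (i + 1) =
      mkBlock 0 (aK (m + 1) n (i + 2)) (aK (m + 1) n i) 0 := fun i hi =>
    aK_succ_of_ne i.succ_ne_zero (by simp at hi; omega)
  rw [aKSum, sum_range_succ, sum_range_succ', sum_congr rfl hmid, aK_succ_zero,
    aK_succ_self m.succ_ne_zero, mkBlock_sum, mkBlock_add, mkBlock_add, sum_range_succ' _ m,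
    sum_range_succ _ m]
  simp only [sum_const_zero, add_zero, zero_add]
  rfl

lemma aKSum_mulVec_one (hk : 1 ≤ k) : aKSum k n *ᵥ 1 = fun _ => (k : ℝ) + 1 := by
  induction n with
  | zero =>
    rw [aKSum, sum_mulVec]
    ext
    simp [aK]
  | succ n ih =>
    have htop : aK k n 0 + ∑ i ∈ range k, aK k n (i + 1) = aKSum k n := by
      rw [aKSum, sum_range_succ', add_comm]
    have hbot : ∑ i ∈ range k, aK k n i + aK k n k = aKSum k n := by
      rw [aKSum, sum_range_succ]
    rw [aKSum_succ hk, mkBlock_mulVec_one, ← add_mulVec, ← add_mulVec, htop, hbot, ih]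
    simp [Function.comp_def]

lemma exists_mem_doublyStochastic_aKSum_eq_smul (hk : 1 ≤ k) :
    ∃ N ∈ doublyStochastic ℝ (Fin (2 ^ n)), aKSum k n = ((k : ℝ) + 1) • N := by
  rw [exists_mem_doublyStochastic_eq_smul_iff (by positivity)]
  refine ⟨aKSum_nonneg, fun p => ?_, fun q => ?_⟩
  · simpa [mulVec, dotProduct] using congrFun (aKSum_mulVec_one hk) p
  · simpa [vecMul, dotProduct] using congrFun (one_vecMul_aKSum hk) q

end aKSum

lemma MK_eq (k n : ℕ) : MK k n = ((2 * k + 2 : ℝ))⁻¹ • (aKSum k n + (aKSum k n)ᵀ) := by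
  rw [MK, sum_add_distrib, ← transpose_sum, aKSum]

/-- For every `k ≥ 1` and `n ≥ 0`, the matrix `M_k⁽ⁿ⁾` is doubly
stochastic: all entries are nonnegative and every row and every column sums to `1`. -/
theorem MK_doublyStochastic (k n : ℕ) (hk : 1 ≤ k) :
    (∀ i j, 0 ≤ MK k n i j) ∧
      (∀ i, ∑ j, MK k n i j = 1) ∧
      (∀ j, ∑ i, MK k n i j = 1) := by
  obtain ⟨N, hN, hS⟩ := exists_mem_doublyStochastic_aKSum_eq_smul (n := n) hk
  have hM : MK k n = (2⁻¹ : ℝ) • N + (2⁻¹ : ℝ) • Nᵀ := by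
    have hc : ((2 * k + 2 : ℝ))⁻¹ * ((k : ℝ) + 1) = 2⁻¹ := by field_simp
    rw [MK_eq, hS, transpose_smul, ← smul_add, smul_smul, hc, smul_add]
  rw [← mem_doublyStochastic_iff_sum, hM]
  exact convex_doublyStochastic hN (transpose_mem_doublyStochastic_iff.mpr hN)
    (by norm_num) (by norm_num) (by norm_num)
end

section
/- Let M be a symmetric real N × N stochastic matrix. Then M is ergodic if and only if the following two conditions hold: (1) the eigenspace of M for the eigenvalue 1 is one-dimensional, and (2) −1 is not an eigenvalue of M. -/
open Matrix

/-- A real `N × N` matrix is stochastic if its entries are nonnegative and each row sums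
to `1`. -/
def IsStochastic {N : ℕ} (M : Matrix (Fin N) (Fin N) ℝ) : Prop :=
  (∀ i j, 0 ≤ M i j) ∧ ∀ i, ∑ j, M i j = 1

/-- A real `N × N` matrix is ergodic if some power `M^s`, `s ≥ 1`, has all entries
strictly positive. -/
def IsErgodic {N : ℕ} (M : Matrix (Fin N) (Fin N) ℝ) : Prop :=
  ∃ s : ℕ, 1 ≤ s ∧ ∀ i j, 0 < (M ^ s) i j

/-!
If `M ^ s` is entrywise positive, the maximum principle forces every vector fixed by `M ^ s`
to be constant. This applies to the `1`-eigenvectors of `M` and, through `M ^ (2 * s)`, to the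
`-1`-eigenvectors, which are then fixed by `M` as well and hence vanish.

Conversely, a symmetric `M` is orthogonally diagonalisable with real eigenvalues, which lie in
`(-1, 1]`; hence `M ^ s` converges. Its limit `P` is stochastic and symmetric, and `M * P = P`
makes its columns `1`-eigenvectors, i.e. constant. So all entries of `P` equal `1 / N > 0`, and
`M ^ s` is positive for large `s`.
-/

open Filter Topology Finset Module.End

theorem mul_eq_of_tendsto_pow {A : Type*} [Monoid A] [TopologicalSpace A] [ContinuousMul A]
    [T2Space A] {a p : A} (h : Tendsto (a ^ ·) atTop (𝓝 p)) : a * p = p :=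
  isFixedPt_of_tendsto_iterate (x := 1) (by simpa using h) (continuous_const_mul a).continuousAt

namespace Matrix

variable {n R : Type*}

theorem mem_span_one_iff [Semiring R] {v : n → R} :
    v ∈ R ∙ (1 : n → R) ↔ ∀ i j, v i = v j := by
  refine ⟨fun h i j => ?_, fun h => ?_⟩
  · obtain ⟨a, rfl⟩ := Submodule.mem_span_singleton.1 h
    simp
  · rcases isEmpty_or_nonempty n with hn | ⟨⟨i⟩⟩
    · simp [Subsingleton.elim v 0]
    · exact Submodule.mem_span_singleton.2 ⟨v i, funext fun j => by simp [h i j]⟩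

variable [Fintype n] [DecidableEq n]

theorem pow_mulVec_of_mulVec_eq_smul [CommSemiring R] {M : Matrix n n R} {v : n → R} {μ : R}
    (h : M *ᵥ v = μ • v) (s : ℕ) : M ^ s *ᵥ v = μ ^ s • v := by
  induction s with
  | zero => simp
  | succ s ih => rw [pow_succ', ← mulVec_mulVec, ih, mulVec_smul, h, smul_smul, pow_succ]

section rowStochastic

variable [CommRing R] [LinearOrder R] [IsStrictOrderedRing R] {M : Matrix n n R}

theorem one_mem_eigenspace_one (hM : M ∈ rowStochastic R n) :
    (1 : n → R) ∈ eigenspace (mulVecLin M) 1 := by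
  rw [mem_eigenspace_iff, mulVecLin_apply, one_smul]
  exact hM.2

theorem apply_eq_of_mulVec_eq_self (hM : M ∈ rowStochastic R n) (hpos : ∀ i j, 0 < M i j)
    {v : n → R} (hv : M *ᵥ v = v) (i j : n) : v i = v j := by
  obtain ⟨i₀, -, hmax⟩ := exists_max_image univ v ⟨i, mem_univ i⟩
  suffices h : ∀ k, v k = v i₀ by rw [h i, h j]
  intro k
  by_contra hk
  have hlt : ∑ m, M i₀ m * v m < ∑ m, M i₀ m * v i₀ :=
    sum_lt_sum (fun m _ => mul_le_mul_of_nonneg_left (hmax m (mem_univ m)) (hM.1 i₀ m))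
      ⟨k, mem_univ k,
        mul_lt_mul_of_pos_left ((hmax k (mem_univ k)).lt_of_ne hk) (hpos i₀ k)⟩
  rw [← sum_mul, sum_row_of_mem_rowStochastic hM, one_mul] at hlt
  exact hlt.ne (congrFun hv i₀)

theorem abs_le_one_of_hasEigenvalue (hM : M ∈ rowStochastic R n) {μ : R}
    (hμ : HasEigenvalue (mulVecLin M) μ) : |μ| ≤ 1 := by
  obtain ⟨v, hv, hv0⟩ := hμ.exists_hasEigenvector
  obtain ⟨i, hi⟩ := Function.ne_iff.1 hv0
  obtain ⟨i₀, -, hmax⟩ := exists_max_image univ (|v ·|) ⟨i, mem_univ i⟩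
  have hv₀ : 0 < |v i₀| := (abs_pos.2 hi).trans_le (hmax i (mem_univ i))
  have hMv : (M *ᵥ v) i₀ = μ * v i₀ := congrFun (mem_eigenspace_iff.1 hv) i₀
  refine le_of_mul_le_mul_right ?_ hv₀
  calc |μ| * |v i₀| = |∑ k, M i₀ k * v k| := by rw [← abs_mul, ← hMv]; rfl
    _ ≤ ∑ k, M i₀ k * |v k| := by
      refine (abs_sum_le_sum_abs _ _).trans_eq (sum_congr rfl fun k _ => ?_)
      rw [abs_mul, abs_of_nonneg (hM.1 i₀ k)]
    _ ≤ ∑ k, M i₀ k * |v i₀| :=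
      sum_le_sum fun k _ => mul_le_mul_of_nonneg_left (hmax k (mem_univ k)) (hM.1 i₀ k)
    _ = 1 * |v i₀| := by rw [← sum_mul, sum_row_of_mem_rowStochastic hM]

theorem eigenspace_one_eq_span_one_of_pow_pos (hM : M ∈ rowStochastic R n) {s : ℕ}
    (hs : ∀ i j, 0 < (M ^ s) i j) : eigenspace (mulVecLin M) 1 = R ∙ (1 : n → R) := by
  refine le_antisymm (fun v hv => ?_)
    ((Submodule.span_singleton_le_iff_mem _ _).2 (one_mem_eigenspace_one hM))
  have hMv : M *ᵥ v = (1 : R) • v := mem_eigenspace_iff.1 hv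
  have hMsv : M ^ s *ᵥ v = v := by simpa using pow_mulVec_of_mulVec_eq_smul hMv s
  exact mem_span_one_iff.2 (apply_eq_of_mulVec_eq_self (pow_mem hM s) hs hMsv)

theorem not_hasEigenvalue_neg_one_of_pow_pos (hM : M ∈ rowStochastic R n) {s : ℕ}
    (hs : ∀ i j, 0 < (M ^ s) i j) : ¬ HasEigenvalue (mulVecLin M) (-1) := by
  intro h
  obtain ⟨v, hv, hv0⟩ := h.exists_hasEigenvector
  have hMv : M *ᵥ v = (-1 : R) • v := mem_eigenspace_iff.1 hv
  have h2s : ∀ i j, 0 < (M ^ (2 * s)) i j := fun i j => by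
    rw [two_mul, pow_add, mul_apply]
    exact sum_pos (fun k _ => mul_pos (hs i k) (hs k j)) ⟨i, mem_univ i⟩
  have hv2 : M ^ (2 * s) *ᵥ v = v := by
    simpa [pow_mul] using pow_mulVec_of_mulVec_eq_smul hMv (2 * s)
  obtain ⟨a, rfl⟩ := Submodule.mem_span_singleton.1
    (mem_span_one_iff.2 (apply_eq_of_mulVec_eq_self (pow_mem hM _) h2s hv2))
  obtain ⟨i, hi⟩ := Function.ne_iff.1 hv0
  have := congrFun hMv i
  rw [mulVec_smul, hM.2] at this
  simp only [Pi.smul_apply, Pi.one_apply, smul_eq_mul, mul_one, neg_one_mul, self_eq_neg]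
    at this hi
  exact hi this

theorem apply_pos_of_isSymm_of_col_const (hM : M ∈ rowStochastic R n) (hsymm : M.IsSymm)
    (hcol : ∀ i k j, M i j = M k j) (i j : n) : 0 < M i j := by
  have hconst : ∀ l, M i l = M i j := fun l => by
    rw [← hsymm.apply i l, hcol l j i, hsymm.apply]
  have hrow := sum_row_of_mem_rowStochastic hM i
  simp only [hconst, sum_const] at hrow
  exact (hM.1 i j).lt_of_ne fun h => by simp [← h] at hrow

variable [TopologicalSpace R] [IsTopologicalRing R] [OrderClosedTopology R]

theorem isClosed_rowStochastic : IsClosed (rowStochastic R n : Set (Matrix n n R)) := by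
  have hnonneg : IsClosed {M : Matrix n n R | ∀ i j, 0 ≤ M i j} := by
    simp only [Set.ofPred_forall]
    exact isClosed_iInter fun i => isClosed_iInter fun j =>
      isClosed_le continuous_const ((continuous_apply j).comp (continuous_apply i))
  exact hnonneg.inter
    (isClosed_eq (continuous_id.matrix_mulVec continuous_const) continuous_const)

theorem apply_pos_of_tendsto_pow (hM : M ∈ rowStochastic R n) (hsymm : M.IsSymm)
    (hE : eigenspace (mulVecLin M) 1 = R ∙ (1 : n → R)) {P : Matrix n n R}
    (hP : Tendsto (M ^ ·) atTop (𝓝 P)) (i j : n) : 0 < P i j := by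
  have hPM : P ∈ rowStochastic R n :=
    isClosed_rowStochastic.mem_of_tendsto hP (.of_forall fun s => pow_mem hM s)
  have hPsymm : P.IsSymm := by
    refine tendsto_nhds_unique ?_ hP
    exact ((continuous_id.matrix_transpose.tendsto P).comp hP).congr fun s => (hsymm.pow s).eq
  have hMP : M * P = P := mul_eq_of_tendsto_pow hP
  have hcol : ∀ i k j, P i j = P k j := fun i k j => by
    have hPj : (fun l => P l j) ∈ eigenspace (mulVecLin M) 1 := by
      rw [mem_eigenspace_iff, mulVecLin_apply, one_smul]
      funext l
      rw [← congrFun (congrFun hMP l) j, mul_apply]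
      rfl
    rw [hE, mem_span_one_iff] at hPj
    exact hPj i k
  exact apply_pos_of_isSymm_of_col_const hPM hPsymm hcol i j

end rowStochastic

theorem IsHermitian.exists_tendsto_pow {𝕜 : Type*} [RCLike 𝕜] {A : Matrix n n 𝕜}
    (hA : A.IsHermitian) (h : ∀ i, hA.eigenvalues i ∈ Set.Ioc (-1) 1) :
    ∃ P, Tendsto (A ^ ·) atTop (𝓝 P) := by
  have hlim : ∀ i, ∃ c, Tendsto (hA.eigenvalues i ^ ·) atTop (𝓝 c) := fun i => by
    obtain ⟨hlo, hhi⟩ := h i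
    rcases hhi.eq_or_lt with h1 | h1
    · exact ⟨1, by simp [h1]⟩
    · exact ⟨0, tendsto_pow_atTop_nhds_zero_of_abs_lt_one (abs_lt.2 ⟨hlo, h1⟩)⟩
  choose c hc using hlim
  set U : Matrix n n 𝕜 := (hA.eigenvectorUnitary : Matrix n n 𝕜)
  have hpow (s : ℕ) :
      A ^ s = U * diagonal (fun i => ((hA.eigenvalues i ^ s : ℝ) : 𝕜)) * star U := by
    conv_lhs => rw [hA.spectral_theorem]
    rw [← map_pow, diagonal_pow, Unitary.conjStarAlgAut_apply]
    congr
    ext i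
    simp
  have hdiag : Tendsto (fun s : ℕ => diagonal fun i => ((hA.eigenvalues i ^ s : ℝ) : 𝕜))
      atTop (𝓝 (diagonal fun i => (c i : 𝕜))) :=
    (continuous_id.matrix_diagonal.tendsto _).comp
      (tendsto_pi_nhds.2 fun i => (RCLike.continuous_ofReal.tendsto _).comp (hc i))
  refine ⟨U * diagonal (fun i => (c i : 𝕜)) * star U, ?_⟩
  simp_rw [hpow]
  exact ((continuous_const.mul continuous_id).mul continuous_const |>.tendsto _).comp hdiag

theorem IsHermitian.eigenvalues_mem_Ioc {M : Matrix n n ℝ} (hA : M.IsHermitian)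
    (hM : M ∈ rowStochastic ℝ n) (hneg : ¬ HasEigenvalue (mulVecLin M) (-1)) (i : n) :
    hA.eigenvalues i ∈ Set.Ioc (-1) 1 := by
  have heig : HasEigenvalue (mulVecLin M) (hA.eigenvalues i) := by
    rw [hasEigenvalue_iff_mem_spectrum, ← toLin'_apply', spectrum_toLin']
    exact hA.eigenvalues_mem_spectrum_real i
  obtain ⟨hlo, hhi⟩ := abs_le.1 (abs_le_one_of_hasEigenvalue hM heig)
  exact ⟨hlo.lt_of_ne fun h => hneg (h ▸ heig), hhi⟩

end Matrix

theorem isErgodic_of_tendsto_pow {N : ℕ} {M P : Matrix (Fin N) (Fin N) ℝ}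
    (hP : Tendsto (M ^ ·) atTop (𝓝 P)) (hpos : ∀ i j, 0 < P i j) : IsErgodic M := by
  have hev : ∀ᶠ s in atTop, ∀ i j, 0 < (M ^ s) i j := by
    simp only [eventually_all]
    exact fun i j =>
      ((continuous_apply_apply i j).tendsto P).comp hP |>.eventually_const_lt (hpos i j)
  obtain ⟨s, hs1, hs⟩ := ((eventually_ge_atTop 1).and hev).exists
  exact ⟨s, hs1, hs⟩

/-- A symmetric real stochastic matrix is ergodic iff the eigenspace of the
eigenvalue `1` is one-dimensional and `−1` is not an eigenvalue. -/
theorem ergodic_iff_spectral {N : ℕ} (hN : 0 < N) (M : Matrix (Fin N) (Fin N) ℝ)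
    (hsymm : M.IsSymm) (hstoch : IsStochastic M) :
    IsErgodic M ↔
      Module.finrank ℝ (Module.End.eigenspace (Matrix.mulVecLin M) 1) = 1 ∧
        ¬ Module.End.HasEigenvalue (Matrix.mulVecLin M) (-1) := by
  have : NeZero N := ⟨hN.ne'⟩
  have hM : M ∈ rowStochastic ℝ (Fin N) := mem_rowStochastic_iff_sum.2 hstoch
  constructor
  · rintro ⟨s, -, hs⟩
    rw [eigenspace_one_eq_span_one_of_pow_pos hM hs]
    exact ⟨finrank_span_singleton one_ne_zero, not_hasEigenvalue_neg_one_of_pow_pos hM hs⟩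
  · rintro ⟨hdim, hneg⟩
    have hE :=
      eq_span_singleton_of_mem_of_finrank_eq_one hdim (one_mem_eigenspace_one hM) one_ne_zero
    have hA : M.IsHermitian := isHermitian_iff_isSymm.2 hsymm
    obtain ⟨P, hP⟩ := hA.exists_tendsto_pow (hA.eigenvalues_mem_Ioc hM hneg)
    exact isErgodic_of_tendsto_pow hP (apply_pos_of_tendsto_pow hM hsymm hE hP)
end
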